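/- A finite transitive frame validates the scheme C_n if and only if it has circumference at most n. -/

import Mathlib

/-- Modal formulas: variables, ⊤, ¬, ∧, □. -/
inductive Fml : Type
  | var : ℕ → Fml
  | top : Fml
  | neg : Fml → Fml
  | and : Fml → Fml → Fml
  | box : Fml → Fml
deriving DecidableEq

namespace Fml
/-- Material implication, defined from ¬ and ∧. -/
def imp (φ ψ : Fml) : Fml := .neg (.and φ (.neg ψ))
/-- Disjunction. -/
def or (φ ψ : Fml) : Fml := .neg (.and (.neg φ) (.neg ψ))
/-- ◇φ := ¬□¬φ. -/
def dia (φ : Fml) : Fml := .neg (.box (.neg φ))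
/-- □*φ := φ ∧ □φ. -/
def boxs (φ : Fml) : Fml := .and φ (.box φ)
/-- ◇*φ := φ ∨ ◇φ. -/
def dias (φ : Fml) : Fml := Fml.or φ (dia φ)
end Fml

/-- Kripke satisfaction. -/
def sat {W : Type} (R : W → W → Prop) (V : ℕ → Set W) : W → Fml → Prop
  | x, .var p => x ∈ V p
  | _, .top => True
  | x, .neg φ => ¬ sat R V x φ
  | x, .and φ ψ => sat R V x φ ∧ sat R V x ψ
  | x, .box φ => ∀ y, R x y → sat R V y φ

/-- P_n(φ0; φ1,...,φn): P_0(φ0) = ◇φ0, P_n(φ0,φ1,...,φn) = ◇(φ1 ∧ P_{n-1}(φ0,φ2,...,φn)). -/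
def Pfml (φ0 : Fml) : List Fml → Fml
  | [] => φ0.dia
  | ψ :: rest => (Fml.and ψ (Pfml φ0 rest)).dia

/-- Conjunction of ¬(φ ∧ ψ) for ψ in the list. -/
def conjNeg (φ : Fml) : List Fml → Fml
  | [] => .top
  | ψ :: rest => .and (.neg (.and φ ψ)) (conjNeg φ rest)

/-- D_n: pairwise disjointness conjunction ⋀_{i<j} ¬(φ_i ∧ φ_j). -/
def Dfml : List Fml → Fml
  | [] => .top
  | φ :: rest => .and (conjNeg φ rest) (Dfml rest)

/-- The scheme C_n instance on φ0,φ1,...,φn (φs = [φ1,...,φn]). -/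
def Cfml (φ0 : Fml) (φs : List Fml) : Fml :=
  ((Dfml (φ0 :: φs)).boxs).imp ((φ0.dia).imp ((Fml.and φ0 (Fml.neg (Pfml φ0 φs))).dia))

/-- The scheme C_n* instance: as C_n but with ◇* in the consequent. -/
def CfmlStar (φ0 : Fml) (φs : List Fml) : Fml :=
  ((Dfml (φ0 :: φs)).boxs).imp ((φ0.dia).imp ((Fml.and φ0 (Fml.neg (Pfml φ0 φs))).dias))

/-- An ascending R-chain. -/
def AscChain {W : Type} (R : W → W → Prop) (x : ℕ → W) : Prop := ∀ m, R (x m) (x (m+1))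

/-- A strictly ascending R-chain. -/
def StrictAscChain {W : Type} (R : W → W → Prop) (x : ℕ → W) : Prop :=
  AscChain R x ∧ ∀ m, ¬ R (x (m+1)) (x m)

/-- The R-cluster of x. -/
def cluster {W : Type} (R : W → W → Prop) (x : W) : Set W := {y | x = y ∨ (R x y ∧ R y x)}

/-- The frame has a cycle of length k (k ≥ 1): k distinct points x_0 R x_1 R ... R x_{k-1} R x_0. -/
def HasCycle {W : Type} (R : W → W → Prop) (k : ℕ) : Prop :=
  1 ≤ k ∧ ∃ x : ℕ → W, (∀ i j, i < k → j < k → x i = x j → i = j) ∧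
    ∀ i < k, R (x i) (x ((i+1) % k))

/-- Circumference at most n: every cycle has length ≤ n. -/
def CircumLE {W : Type} (R : W → W → Prop) (n : ℕ) : Prop := ∀ k, HasCycle R k → k ≤ n

/-- The frame (W,R) validates the scheme C_n. -/
def ValidatesCn {W : Type} (R : W → W → Prop) (n : ℕ) : Prop :=
  ∀ (V : ℕ → Set W) (x : W) (φ0 : Fml) (φs : List Fml), φs.length = n →
    sat R V x (Cfml φ0 φs)

/-- A Boolean valuation on formulas (box-formulas and variables as atoms). -/
def BoolEval (w : Fml → Bool) : Prop :=
  w .top = true ∧ (∀ φ, w (.neg φ) = !w φ) ∧ (∀ φ ψ, w (.and φ ψ) = (w φ && w ψ))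

/-- Propositional tautologies. -/
def Tautology (φ : Fml) : Prop := ∀ w, BoolEval w → w φ = true

/-- Theorems of the smallest normal modal logic containing the axiom set Ax. -/
inductive Prov (Ax : Set Fml) : Fml → Prop
  | taut {φ} : Tautology φ → Prov Ax φ
  | kax (φ ψ) : Prov Ax ((Fml.box (φ.imp ψ)).imp ((Fml.box φ).imp (Fml.box ψ)))
  | ax {φ} : φ ∈ Ax → Prov Ax φ
  | mp {φ ψ} : Prov Ax (φ.imp ψ) → Prov Ax φ → Prov Ax ψ
  | nec {φ} : Prov Ax φ → Prov Ax (.box φ)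

/-- All instances of the transitivity scheme 4. -/
def Ax4 : Set Fml := {χ | ∃ φ, χ = (Fml.box φ).imp (Fml.box (Fml.box φ))}

/-- Axioms of K4C_n: scheme 4 together with all instances of scheme C_n. -/
def AxK4C (n : ℕ) : Set Fml :=
  Ax4 ∪ {χ | ∃ (φ0 : Fml) (φs : List Fml), φs.length = n ∧ χ = Cfml φ0 φs}

/-!
If a transitive frame has a cycle of length k > n, its points all see each other. Making pᵢ
true exactly at the i-th point for i < n, and pₙ at all later ones, gives pairwise disjoint
p₀, …, pₙ, and from any p₀-point the path p₁, …, pₙ, p₀ runs around the cycle, so C_n fails.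

Conversely, if C_n fails at x, every φ₀-successor y of x satisfies P_n, i.e. starts a path
y R z₁ R ⋯ R zₙ R z with zᵢ ⊨ φᵢ and z again a φ₀-successor of x. Iterating y ↦ z on the finite
set of φ₀-successors reaches a periodic point, from which transitivity closes the path into a
cycle; its n + 1 points are distinct because φ₀, …, φₙ are pairwise disjoint there.
-/

section Semantics

variable {W : Type} {R : W → W → Prop} {V : ℕ → Set W}

theorem sat_imp {x : W} {φ ψ : Fml} : sat R V x (φ.imp ψ) ↔ (sat R V x φ → sat R V x ψ) := by
  simp [Fml.imp, sat]

theorem sat_dia {x : W} {φ : Fml} : sat R V x φ.dia ↔ ∃ y, R x y ∧ sat R V y φ := by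
  simp [Fml.dia, sat]

theorem sat_boxs {x : W} {φ : Fml} :
    sat R V x φ.boxs ↔ sat R V x φ ∧ ∀ y, R x y → sat R V y φ :=
  Iff.rfl

theorem sat_conjNeg {x : W} {φ : Fml} {L : List Fml} :
    sat R V x (conjNeg φ L) ↔ ∀ ψ ∈ L, ¬(sat R V x φ ∧ sat R V x ψ) := by
  induction L with
  | nil => simp [conjNeg, sat]
  | cons ψ L ih => simp [conjNeg, sat, ih]

theorem sat_Dfml {x : W} {L : List Fml} :
    sat R V x (Dfml L) ↔ L.Pairwise fun φ ψ => ¬(sat R V x φ ∧ sat R V x ψ) := by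
  induction L with
  | nil => simp [Dfml, sat]
  | cons φ L ih => rw [List.pairwise_cons, ← ih, ← sat_conjNeg]; rfl

theorem sat_Pfml {y : W} {φ0 : Fml} {φs : List Fml} :
    sat R V y (Pfml φ0 φs) ↔ ∃ c : ℕ → W, c 0 = y ∧ (∀ i ≤ φs.length, R (c i) (c (i + 1))) ∧
      (∀ i (h : i < φs.length), sat R V (c (i + 1)) φs[i]) ∧ sat R V (c (φs.length + 1)) φ0 := by
  induction φs generalizing y with
  | nil =>
    simp only [Pfml, sat_dia, List.length_nil, Nat.le_zero, forall_eq, Nat.not_lt_zero,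
      IsEmpty.forall_iff, implies_true, true_and]
    constructor
    · rintro ⟨z, hyz, hz⟩
      exact ⟨fun i => if i = 0 then y else z, rfl, hyz, hz⟩
    · rintro ⟨c, rfl, hc, hc1⟩
      exact ⟨c 1, hc, hc1⟩
  | cons ψ φs ih =>
    simp only [Pfml, sat_dia, sat, ih, List.length_cons]
    constructor
    · rintro ⟨z, hyz, hz, c, rfl, hc, hlab, hend⟩
      refine ⟨fun i => if i = 0 then y else c (i - 1), rfl, ?_, ?_, hend⟩
      · rintro (_ | i) hi
        exacts [hyz, hc i (by omega)]
      · rintro (_ | i) hi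
        exacts [hz, hlab i (by omega)]
    · rintro ⟨c, rfl, hc, hlab, hend⟩
      exact ⟨c 1, hc 0 (by omega), hlab 0 (by omega), fun i => c (i + 1), rfl,
        fun i hi => hc (i + 1) (by omega), fun i hi => hlab (i + 1) (by simpa using hi), hend⟩

theorem sat_Cfml {x : W} {φ0 : Fml} {φs : List Fml} :
    sat R V x (Cfml φ0 φs) ↔
      ((φ0 :: φs).Pairwise (fun φ ψ => ¬(sat R V x φ ∧ sat R V x ψ)) ∧
          ∀ y, R x y → (φ0 :: φs).Pairwise fun φ ψ => ¬(sat R V y φ ∧ sat R V y ψ)) →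
        (∃ y, R x y ∧ sat R V y φ0) →
          ∃ y, R x y ∧ sat R V y φ0 ∧ ¬sat R V y (Pfml φ0 φs) := by
  simp only [Cfml, sat_imp, sat_boxs, sat_Dfml, sat_dia]
  rfl

end Semantics

section Cycles

variable {W : Type} {R : W → W → Prop}

theorem rel_of_cycle [IsTrans W R] {x : ℕ → W} {k : ℕ}
    (hedge : ∀ i < k, R (x i) (x ((i + 1) % k))) {i j : ℕ} (hi : i < k) (hj : j < k) :
    R (x i) (x j) := by
  have hsteps : ∀ m, R (x i) (x ((i + m + 1) % k)) := by
    intro m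
    induction m with
    | zero => exact hedge i hi
    | succ m ih =>
      have hnext := hedge _ (Nat.mod_lt (i + m + 1) (by omega))
      rw [Nat.mod_add_mod] at hnext
      exact IsTrans.trans _ _ _ ih hnext
  have hj' : (i + (j + k - i - 1) + 1) % k = j := by
    rw [show i + (j + k - i - 1) + 1 = j + k by omega, Nat.add_mod_right, Nat.mod_eq_of_lt hj]
  simpa only [hj'] using hsteps (j + k - i - 1)

theorem hasCycle_succ_of_path {c : ℕ → W} {k : ℕ} (hinj : ∀ i ≤ k, ∀ j ≤ k, c i = c j → i = j)
    (hpath : ∀ i < k, R (c i) (c (i + 1))) (hclose : R (c k) (c 0)) : HasCycle R (k + 1) := by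
  refine ⟨by omega, c, fun i j hi hj => hinj i (by omega) j (by omega), fun i hi => ?_⟩
  rcases Nat.lt_succ_iff_lt_or_eq.1 hi with hik | rfl
  · rw [Nat.mod_eq_of_lt (by omega)]; exact hpath i hik
  · rwa [Nat.mod_self]

theorem Relation.reflTransGen_iterate {α : Type*} {r : α → α → Prop} {f : α → α}
    (hf : ∀ a, r a (f a)) (a : α) (t : ℕ) : Relation.ReflTransGen r a (f^[t] a) := by
  induction t with
  | zero => exact .refl
  | succ t ih => rw [Function.iterate_succ_apply']; exact ih.tail (hf _)

theorem Function.periodicPts_nonempty {α : Type*} [Finite α] [Nonempty α] (f : α → α) :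
    (Function.periodicPts f).Nonempty := by
  obtain ⟨i, j, hij, he⟩ :=
    Finite.exists_ne_map_eq_of_infinite fun t : ℕ => f^[t] (Classical.arbitrary α)
  wlog hlt : i < j generalizing i j
  · exact this j i hij.symm he.symm (by omega)
  refine ⟨f^[i] (Classical.arbitrary α), j - i, by omega, ?_⟩
  rw [Function.IsPeriodicPt, Function.IsFixedPt, ← Function.iterate_add_apply,
    Nat.sub_add_cancel hlt.le, he]

theorem Finite.exists_reflTransGen_apply_self {α : Type*} [Finite α] [Nonempty α]
    {r : α → α → Prop} {f : α → α} (hf : ∀ a, r a (f a)) :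
    ∃ a, Relation.ReflTransGen r (f a) a := by
  obtain ⟨a, m, hm, hper⟩ := Function.periodicPts_nonempty f
  refine ⟨a, ?_⟩
  have hiter := Relation.reflTransGen_iterate hf (f a) (m - 1)
  rwa [← Function.iterate_succ_apply, Nat.succ_eq_add_one, Nat.sub_add_cancel hm, hper.eq] at hiter

end Cycles

section Frames

variable {W : Type} {R : W → W → Prop} {V : ℕ → Set W}

theorem index_eq_of_sat_getElem {L : List Fml} {c : ℕ → W}
    (hD : ∀ i < L.length, L.Pairwise fun φ ψ => ¬(sat R V (c i) φ ∧ sat R V (c i) ψ))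
    (hlab : ∀ i (h : i < L.length), sat R V (c i) L[i]) {i j : ℕ} (hi : i < L.length)
    (hj : j < L.length) (hij : c i = c j) : i = j := by
  by_contra hne
  wlog hlt : i < j generalizing i j
  · exact this hj hi hij.symm (Ne.symm hne) (by omega)
  exact List.pairwise_iff_getElem.1 (hD i hi) i j hi hj hlt ⟨hlab i hi, hij ▸ hlab j hj⟩

theorem hasCycle_of_closed_Pfml_path {φ0 : Fml} {φs : List Fml} {c : ℕ → W}
    (hD : ∀ i ≤ φs.length, (φ0 :: φs).Pairwise fun φ ψ => ¬(sat R V (c i) φ ∧ sat R V (c i) ψ))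
    (h0 : sat R V (c 0) φ0) (hpath : ∀ i < φs.length, R (c i) (c (i + 1)))
    (hlab : ∀ i (h : i < φs.length), sat R V (c (i + 1)) φs[i])
    (hclose : R (c φs.length) (c 0)) : HasCycle R (φs.length + 1) := by
  have hlab' : ∀ i (h : i < (φ0 :: φs).length), sat R V (c i) (φ0 :: φs)[i] := by
    rintro (_ | i) hi
    exacts [h0, hlab i (by simpa using hi)]
  refine hasCycle_succ_of_path (fun i hi j hj hij => ?_) hpath hclose
  exact index_eq_of_sat_getElem (fun i hi => hD i (by simpa [Nat.lt_succ_iff] using hi)) hlab'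
    (by simpa [Nat.lt_succ_iff] using hi) (by simpa [Nat.lt_succ_iff] using hj) hij

theorem not_validatesCn_of_hasCycle [IsTrans W R] {n k : ℕ} (hnk : n < k)
    (hcyc : HasCycle R k) : ¬ValidatesCn R n := by
  obtain ⟨-, x, hinj, hedge⟩ := hcyc
  have reach {i j : ℕ} (hi : i < k) (hj : j < k) : R (x i) (x j) :=
    rel_of_cycle hedge hi hj
  let V : ℕ → Set W := fun p => {w | ∃ j < k, w = x j ∧ min j n = p}
  let φs : List Fml := (List.range n).map fun i => .var (i + 1)
  have hlen : φs.length = n := by simp [φs]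
  have hlabel : ∀ i (h : i < (Fml.var 0 :: φs).length), (Fml.var 0 :: φs)[i] = .var i := by
    rintro (_ | i) h
    · rfl
    · simp [φs]
  have hD : ∀ w, (Fml.var 0 :: φs).Pairwise fun φ ψ => ¬(sat R V w φ ∧ sat R V w ψ) := by
    intro w
    refine List.pairwise_iff_getElem.2 fun i j hi hj hij => ?_
    rw [hlabel i hi, hlabel j hj]
    rintro ⟨⟨a, ha, rfl, rfl⟩, ⟨b, hb, hab, rfl⟩⟩
    have := hinj a b ha hb hab
    omega
  intro hval
  obtain ⟨y, -, ⟨j, hj, rfl, hj0⟩, hnotP⟩ := sat_Cfml.1 (hval V (x 0) (.var 0) φs hlen)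
    ⟨hD _, fun y _ => hD y⟩ ⟨x 0, reach (by omega) (by omega), 0, by omega, rfl, by simp⟩
  refine hnotP (sat_Pfml.2 ⟨fun i => x (if i = 0 ∨ i = n + 1 then j else i), by simp,
    fun i hi => reach (by split_ifs <;> omega) (by split_ifs <;> omega), fun i hi => ?_, ?_⟩)
  · rw [hlen] at hi
    simp only [φs, List.getElem_map, List.getElem_range]
    exact ⟨i + 1, by omega, by simp [hi.ne], by omega⟩
  · exact ⟨j, hj, by simp [hlen], hj0⟩

theorem validatesCn_of_circumLE [Finite W] [IsTrans W R] {n : ℕ} (hcirc : CircumLE R n) :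
    ValidatesCn R n := by
  have hTG {a b : W} (h : Relation.TransGen R a b) : R a b := by
    rwa [Relation.transGen_eq_self] at h
  intro V x φ0 φs hlen
  rw [sat_Cfml]
  rintro ⟨-, hD⟩ ⟨y0, hxy0, hy0⟩
  by_contra! hP
  let S := {y : W // R x y ∧ sat R V y φ0}
  have : Nonempty S := ⟨⟨y0, hxy0, hy0⟩⟩
  choose c hc0 hcR hclab hcend using fun y : S => sat_Pfml.1 (hP y.1 y.2.1 y.2.2)
  have hfrom (y : S) {i : ℕ} (hi : i ≤ φs.length + 1) : Relation.ReflTransGen R y (c y i) := by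
    induction i with
    | zero => rw [hc0]
    | succ i ih => exact (ih (by omega)).tail (hcR y i (by omega))
  have hx (y : S) {i : ℕ} (hi : i ≤ φs.length + 1) : R x (c y i) :=
    hTG (.head' y.2.1 (hfrom y hi))
  let g : S → S := fun y => ⟨c y (φs.length + 1), hx y le_rfl, hcend y⟩
  have hg (y : S) : R y (g y) := hTG (.tail' (hfrom y (by omega)) (hcR y _ le_rfl))
  obtain ⟨ys, hback⟩ := Finite.exists_reflTransGen_apply_self (r := fun a b : S => R a b) hg
  replace hback : Relation.ReflTransGen R (g ys) ys := hback.lift Subtype.val fun _ _ h => h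
  have hclose : R (c ys φs.length) (c ys 0) :=
    hc0 ys ▸ hTG (.head' (hcR ys _ le_rfl) hback)
  have hcyc := hasCycle_of_closed_Pfml_path (fun i hi => hD _ (hx ys (by omega)))
    (hc0 ys ▸ ys.2.2) (fun i hi => hcR ys i hi.le) (hclab ys) hclose
  exact absurd (hcirc _ hcyc) (by omega)

end Frames

/-- a finite transitive frame validates C_n iff it has circumference
at most n. -/
theorem stmt6 {W : Type} [Finite W] (R : W → W → Prop) (hT : Transitive R) (n : ℕ) :
    ValidatesCn R n ↔ CircumLE R n := by
  have : IsTrans W R := ⟨fun _ _ _ => @hT _ _ _⟩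
  exact ⟨fun hval _ hcyc => le_of_not_gt fun hnk => not_validatesCn_of_hasCycle hnk hcyc hval,
    validatesCn_of_circumLE⟩
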